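/- arXiv:1911.06119 — 6 statements merged into one kernel-verified Lean document; each statement's English description precedes it below -/
import Mathlib

section
/- Fix σ > 0 and k ≥ 0. For every ε > 0 there exists D_ε ∈ (0,1) such that for every D ∈ (0, D_ε) and every principal eigenpair (λ, φ) of −L_D (the nonlocal Neumann operator with dispersal rate D), one has −max_{x ∈ cl(Ω)} a_T(x) − ε ≤ λ ≤ −min_{x ∈ cl(Ω)} a_T(x) + ε. -/
open MeasureTheory Filter Topology

/-- The time-periodic nonlocal dispersal operator of Neumann type
`L[u](t,x) = -∂ₜu(t,x) + (D/σ^{N+k}) ∫_Ω J((x-y)/σ)(u(t,y)-u(t,x)) dy + a(t,x)u(t,x)`. -/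
noncomputable def nlOp {N : ℕ} (Ω : Set (EuclideanSpace ℝ (Fin N)))
    (J : EuclideanSpace ℝ (Fin N) → ℝ) (a : ℝ → EuclideanSpace ℝ (Fin N) → ℝ)
    (D σ k : ℝ) (u : ℝ → EuclideanSpace ℝ (Fin N) → ℝ)
    (t : ℝ) (x : EuclideanSpace ℝ (Fin N)) : ℝ :=
  -(deriv (fun s => u s x) t)
    + (D / σ ^ ((N : ℝ) + k)) * (∫ y in Ω, J (σ⁻¹ • (x - y)) * (u t y - u t x))
    + a t x * u t x

/-- Membership in `X`: continuous on `ℝ × cl(Ω)`, `C¹` in `t` for each `x ∈ cl(Ω)`,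
and `T`-periodic in `t`. -/
def memX {N : ℕ} (Ω : Set (EuclideanSpace ℝ (Fin N))) (T : ℝ)
    (u : ℝ → EuclideanSpace ℝ (Fin N) → ℝ) : Prop :=
  ContinuousOn (fun p : ℝ × EuclideanSpace ℝ (Fin N) => u p.1 p.2)
    (Set.univ ×ˢ closure Ω) ∧
  (∀ x ∈ closure Ω, ContDiff ℝ 1 fun t => u t x) ∧
  (∀ t x, u (t + T) x = u t x)

/-- Membership in `X⁺⁺`: member of `X` which is positive on `ℝ × cl(Ω)`. -/
def memXpp {N : ℕ} (Ω : Set (EuclideanSpace ℝ (Fin N))) (T : ℝ)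
    (u : ℝ → EuclideanSpace ℝ (Fin N) → ℝ) : Prop :=
  memX Ω T u ∧ ∀ t : ℝ, ∀ x ∈ closure Ω, 0 < u t x

/-- `(lam, u)` is a principal eigenpair of `-L`. -/
def isPEigenpair {N : ℕ} (Ω : Set (EuclideanSpace ℝ (Fin N)))
    (J : EuclideanSpace ℝ (Fin N) → ℝ) (a : ℝ → EuclideanSpace ℝ (Fin N) → ℝ)
    (T D σ k : ℝ) (lam : ℝ) (u : ℝ → EuclideanSpace ℝ (Fin N) → ℝ) : Prop :=
  memXpp Ω T u ∧
    ∀ t : ℝ, ∀ x ∈ closure Ω, nlOp Ω J a D σ k u t x + lam * u t x = 0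

/-- The time average `a_T(x) = (1/T) ∫₀ᵀ a(t,x) dt`. -/
noncomputable def timeAvg {N : ℕ} (T : ℝ) (a : ℝ → EuclideanSpace ℝ (Fin N) → ℝ)
    (x : EuclideanSpace ℝ (Fin N)) : ℝ :=
  (1 / T) * ∫ t in (0:ℝ)..T, a t x

lemma osc_lemma {g g' : ℝ → ℝ} {T M : ℝ} (hM : 0 ≤ M)
    (hd : ∀ t, HasDerivAt g (g' t) t) (hc : Continuous g')
    (hzero : ∫ t in (0:ℝ)..T, g' t = 0)
    (hlb : ∀ t, -M ≤ g' t) {s t : ℝ} (hs : s ∈ Set.Icc 0 T) (ht : t ∈ Set.Icc (0:ℝ) T) :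
    g t - g s ≤ M * T := by
  have hii : ∀ u v : ℝ, IntervalIntegrable g' volume u v := fun u v =>
    hc.intervalIntegrable u v
  have hsub : ∀ u v : ℝ, ∫ r in u..v, g' r = g v - g u := fun u v =>
    intervalIntegral.integral_eq_sub_of_hasDerivAt (fun r _ => hd r) (hii u v)
  have hlow : ∀ u v : ℝ, u ≤ v → -(M * (v - u)) ≤ ∫ r in u..v, g' r := by
    intro u v huv
    have h1 : ∫ r in u..v, (-M : ℝ) ≤ ∫ r in u..v, g' r :=
      intervalIntegral.integral_mono_on huv intervalIntegrable_const (hii u v)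
        (fun r _ => hlb r)
    simpa [intervalIntegral.integral_const, smul_eq_mul, mul_comm] using h1
  rcases le_total s t with h | h
  · have e1 : (∫ r in (0:ℝ)..s, g' r) + ∫ r in s..t, g' r = ∫ r in (0:ℝ)..t, g' r :=
      intervalIntegral.integral_add_adjacent_intervals (hii 0 s) (hii s t)
    have e2 : (∫ r in (0:ℝ)..t, g' r) + ∫ r in t..T, g' r = ∫ r in (0:ℝ)..T, g' r :=
      intervalIntegral.integral_add_adjacent_intervals (hii 0 t) (hii t T)
    have b1 := hlow 0 s hs.1
    have b2 := hlow t T ht.2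
    have e3 : g t - g s = ∫ r in s..t, g' r := (hsub s t).symm
    rw [e3]
    nlinarith [mul_nonneg hM (sub_nonneg.2 h)]
  · have b := hlow t s h
    rw [hsub t s] at b
    nlinarith [mul_nonneg hM (show (0:ℝ) ≤ T - (s - t) by
      have := hs.2; have := ht.1; linarith)]

set_option maxHeartbeats 2000000 in
theorem eigenvalue_bounds_small_dispersal_rate
    (N : ℕ) (hN : 1 ≤ N)
    (Ω : Set (EuclideanSpace ℝ (Fin N)))
    (hΩne : Ω.Nonempty) (hΩopen : IsOpen Ω) (hΩbdd : Bornology.IsBounded Ω)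
    (hΩconn : IsConnected Ω)
    (J : EuclideanSpace ℝ (Fin N) → ℝ)
    (hJcont : Continuous J) (hJnonneg : ∀ x, 0 ≤ J x)
    (γ : ℝ) (hγ : 0 < γ)
    (hJsupp : Function.support J ⊆ Metric.ball (0 : EuclideanSpace ℝ (Fin N)) γ)
    (hJ0 : 0 < J 0) (hJint : ∫ x, J x = 1)
    (T : ℝ) (hT : 0 < T)
    (a : ℝ → EuclideanSpace ℝ (Fin N) → ℝ)
    (hacont : Continuous fun p : ℝ × EuclideanSpace ℝ (Fin N) => a p.1 p.2)
    (haper : ∀ t x, a (t + T) x = a t x)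
    (σ k : ℝ) (hσ : 0 < σ) (hk : 0 ≤ k) :
    ∀ ε : ℝ, 0 < ε → ∃ Dε : ℝ, Dε ∈ Set.Ioo (0:ℝ) 1 ∧
      ∀ D : ℝ, D ∈ Set.Ioo 0 Dε →
        ∀ (lam : ℝ) (φ : ℝ → EuclideanSpace ℝ (Fin N) → ℝ),
          isPEigenpair Ω J a T D σ k lam φ →
            -(sSup (timeAvg T a '' closure Ω)) - ε ≤ lam ∧
              lam ≤ -(sInf (timeAvg T a '' closure Ω)) + ε := by
  intro ε hε
  -- basic compactness facts
  have hclΩ : IsCompact (closure Ω) := hΩbdd.isCompact_closure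
  have hclne : (closure Ω).Nonempty := hΩne.closure
  have hKc : IsCompact (Set.Icc (0:ℝ) T ×ˢ closure Ω) := isCompact_Icc.prod hclΩ
  -- bound on a
  obtain ⟨A₀, hA₀⟩ := hKc.exists_bound_of_continuousOn hacont.continuousOn
  obtain ⟨A, hAdef⟩ : ∃ A : ℝ, A = max A₀ 0 := ⟨_, rfl⟩
  have hA0 : 0 ≤ A := hAdef ▸ le_max_right _ _
  have habd : ∀ (t : ℝ), ∀ x ∈ closure Ω, |a t x| ≤ A := by
    intro t x hx
    have hper : Function.Periodic (fun s => a s x) T := fun s => haper s x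
    obtain ⟨t', ht', he⟩ := hper.exists_mem_Ico₀ hT t
    have : ‖a t' x‖ ≤ A₀ := hA₀ (t', x) ⟨⟨ht'.1, ht'.2.le⟩, hx⟩
    rw [Real.norm_eq_abs] at this
    calc |a t x| = |a t' x| := by rw [he]
    _ ≤ A₀ := this
    _ ≤ A := hAdef ▸ le_max_left _ _
  -- constants
  have hcσpos : (0:ℝ) < σ ^ ((N : ℝ) + k) := Real.rpow_pos_of_pos hσ _
  obtain ⟨B, hBdef⟩ : ∃ B : ℝ, B = σ ^ N / σ ^ ((N : ℝ) + k) := ⟨_, rfl⟩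
  have hBpos : 0 < B := by rw [hBdef]; positivity
  obtain ⟨M, hMdef⟩ : ∃ M : ℝ, M = B + 2 * A := ⟨_, rfl⟩
  have hM0 : 0 ≤ M := by rw [hMdef]; linarith
  obtain ⟨E, hEdef⟩ : ∃ E : ℝ, E = Real.exp (M * T) * Real.exp (M * T) := ⟨_, rfl⟩
  have hE1 : 1 ≤ E := by
    rw [hEdef, ← Real.exp_add]
    have h0 : (0:ℝ) ≤ M * T + M * T := by positivity
    calc (1:ℝ) = Real.exp 0 := Real.exp_zero.symm
      _ ≤ _ := Real.exp_le_exp.2 h0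
  have hEpos : 0 < E := lt_of_lt_of_le one_pos hE1
  refine ⟨min (1/2) (ε / (B * E)), ⟨lt_min (by norm_num) (div_pos hε (mul_pos hBpos hEpos)),
    lt_of_le_of_lt (min_le_left _ _) (by norm_num)⟩, ?_⟩
  intro D hD lam φ hpair
  obtain ⟨⟨⟨hφc, hφC1, hφper⟩, hφpos⟩, heq⟩ := hpair
  have hD0 : 0 < D := hD.1
  have hD1 : D ≤ 1 := le_trans hD.2.le (le_trans (min_le_left _ _) (by norm_num))
  have hDBE : D * (B * E) ≤ ε := by
    have h2 : D ≤ ε / (B * E) := le_trans hD.2.le (min_le_right _ _)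
    rw [le_div_iff₀ (mul_pos hBpos hEpos)] at h2
    linarith
  have hDB : D * B ≤ ε := by
    nlinarith [mul_nonneg hD0.le hBpos.le]
  -- the J integral computation
  have hJfull : ∀ x : EuclideanSpace ℝ (Fin N),
      ∫ y, J (σ⁻¹ • (x - y)) = σ ^ N := by
    intro x
    have h1 : ∫ y, J (σ⁻¹ • (x - y)) = ∫ y, J (σ⁻¹ • y) :=
      integral_sub_left_eq_self (fun y => J (σ⁻¹ • y)) volume x
    rw [h1, MeasureTheory.Measure.integral_comp_inv_smul volume J σ,
      finrank_euclideanSpace_fin, abs_of_nonneg (pow_nonneg hσ.le _), smul_eq_mul, hJint,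
      mul_one]
  have hJintg : ∀ x : EuclideanSpace ℝ (Fin N),
      Integrable (fun y => J (σ⁻¹ • (x - y))) := by
    intro x
    have hcs : HasCompactSupport J := by
      apply HasCompactSupport.intro (isCompact_closedBall (0 : EuclideanSpace ℝ (Fin N)) γ)
      intro y hy
      by_contra h
      exact hy (Metric.ball_subset_closedBall (hJsupp h))
    have hφ : HasCompactSupport (fun y => J (σ⁻¹ • (x - y))) := by
      have h1 : (fun y : EuclideanSpace ℝ (Fin N) => J (σ⁻¹ • (x - y)))
          = J ∘ ((Homeomorph.subLeft x).trans
              (Homeomorph.smulOfNeZero σ⁻¹ (by positivity))) := by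
        ext y; simp [Homeomorph.subLeft]
      rw [h1]
      exact hcs.comp_homeomorph _
    exact (hJcont.comp ((continuous_const.sub continuous_id).const_smul
      σ⁻¹)).integrable_of_hasCompactSupport hφ
  have hJΩnn : ∀ x : EuclideanSpace ℝ (Fin N),
      0 ≤ ∫ y in Ω, J (σ⁻¹ • (x - y)) :=
    fun x => setIntegral_nonneg hΩopen.measurableSet (fun y _ => hJnonneg _)
  have hJΩle : ∀ x : EuclideanSpace ℝ (Fin N),
      ∫ y in Ω, J (σ⁻¹ • (x - y)) ≤ σ ^ N := by
    intro x
    calc ∫ y in Ω, J (σ⁻¹ • (x - y))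
        ≤ ∫ y, J (σ⁻¹ • (x - y)) :=
          setIntegral_le_integral (hJintg x) (ae_of_all _ fun y => hJnonneg _)
      _ = σ ^ N := hJfull x
  -- continuity of slices
  have hφslice : ∀ t : ℝ, ContinuousOn (fun y => φ t y) (closure Ω) := by
    intro t
    exact hφc.comp ((Continuous.prodMk_right t).continuousOn) (fun y hy => ⟨Set.mem_univ _, hy⟩)
  have hIntK : ∀ (t : ℝ) (x : EuclideanSpace ℝ (Fin N)),
      IntegrableOn (fun y => J (σ⁻¹ • (x - y)) * (φ t y - φ t x)) Ω := by
    intro t x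
    have hcont2 : ContinuousOn (fun y => J (σ⁻¹ • (x - y)) * (φ t y - φ t x)) (closure Ω) :=
      ((hJcont.comp ((continuous_const.sub continuous_id).const_smul σ⁻¹)).continuousOn).mul
        ((hφslice t).sub continuousOn_const)
    exact (hcont2.integrableOn_compact hclΩ).mono_set subset_closure
  -- crude lower bound on lam
  have hlamA : -A ≤ lam := by
    obtain ⟨x₀, hx₀⟩ := hclne
    obtain ⟨p₁, hp₁mem, hp₁max⟩ := hKc.exists_isMaxOn ⟨(0, x₀), ⟨⟨le_refl _, hT.le⟩, hx₀⟩⟩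
      (hφc.mono (fun p hp => ⟨Set.mem_univ _, hp.2⟩))
    obtain ⟨t₁, x₁⟩ := p₁
    have ht₁ : t₁ ∈ Set.Icc (0:ℝ) T := hp₁mem.1
    have hx₁ : x₁ ∈ closure Ω := hp₁mem.2
    have hmax_all : ∀ t : ℝ, φ t x₁ ≤ φ t₁ x₁ := by
      intro t
      have hper : Function.Periodic (fun s => φ s x₁) T := fun s => hφper s x₁
      obtain ⟨t', ht', he⟩ := hper.exists_mem_Ico₀ hT t
      calc φ t x₁ = φ t' x₁ := he
        _ ≤ φ t₁ x₁ := hp₁max (show ((t', x₁) : ℝ × EuclideanSpace ℝ (Fin N)) ∈ _ from ⟨⟨ht'.1, ht'.2.le⟩, hx₁⟩)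
    have hd0 : deriv (fun s => φ s x₁) t₁ = 0 := by
      have hmax : IsMaxOn (fun s => φ s x₁) Set.univ t₁ := fun t _ => hmax_all t
      exact (hmax.isLocalMax Filter.univ_mem).deriv_eq_zero
    have hK1 : (∫ y in Ω, J (σ⁻¹ • (x₁ - y)) * (φ t₁ y - φ t₁ x₁)) ≤ 0 := by
      apply setIntegral_nonpos hΩopen.measurableSet
      intro y hy
      have h1 : φ t₁ y ≤ φ t₁ x₁ := hp₁max (show ((t₁, y) : ℝ × EuclideanSpace ℝ (Fin N)) ∈ _ from ⟨ht₁, subset_closure hy⟩)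
      nlinarith [hJnonneg (σ⁻¹ • (x₁ - y))]
    have heq1 := heq t₁ x₁ hx₁
    simp only [nlOp, hd0] at heq1
    have hpos1 := hφpos t₁ x₁ hx₁
    have hcoef : 0 ≤ D / σ ^ ((N : ℝ) + k) := by positivity
    have hge : 0 ≤ (a t₁ x₁ + lam) * φ t₁ x₁ := by nlinarith
    have : -(a t₁ x₁) ≤ lam := by
      by_contra hcon
      push_neg at hcon
      nlinarith
    have := habd t₁ x₁ hx₁
    rw [abs_le] at this
    linarith
  -- the per-point analysis
  have key : ∀ x ∈ closure Ω,
      (lam ≤ -(timeAvg T a x) + D * B) ∧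
      (∀ s ∈ Set.Icc (0:ℝ) T, ∀ t ∈ Set.Icc (0:ℝ) T,
        φ t x ≤ Real.exp (M * T) * φ s x) ∧
      ((∀ t ∈ Set.Icc (0:ℝ) T, ∀ y ∈ closure Ω, φ t y ≤ E * φ t x) →
        -(timeAvg T a x) - D * (B * E) ≤ lam) := by
    intro x hx
    have hfx1 : ContDiff ℝ 1 (fun s => φ s x) := hφC1 x hx
    have hfpos : ∀ t, 0 < φ t x := fun t => hφpos t x hx
    have hdf : Continuous (deriv (fun s => φ s x)) := hfx1.continuous_deriv le_rfl
    have hfc : Continuous (fun s => φ s x) := hfx1.continuous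
    have hax : Continuous (fun t => a t x) := hacont.comp (continuous_id.prodMk continuous_const)
    -- the eigen-equation in derivative form
    have heqx : ∀ t : ℝ, deriv (fun s => φ s x) t =
        D / σ ^ ((N : ℝ) + k) * (∫ y in Ω, J (σ⁻¹ • (x - y)) * (φ t y - φ t x))
          + (a t x + lam) * φ t x := by
      intro t
      have := heq t x hx
      simp only [nlOp] at this
      linarith
    -- lower bound for K
    have hKlb : ∀ t : ℝ, -(σ ^ N * φ t x) ≤
        ∫ y in Ω, J (σ⁻¹ • (x - y)) * (φ t y - φ t x) := by
      intro t
      have hmono : ∫ y in Ω, (-(φ t x)) * J (σ⁻¹ • (x - y)) ≤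
          ∫ y in Ω, J (σ⁻¹ • (x - y)) * (φ t y - φ t x) := by
        apply setIntegral_mono_on ((hJintg x).const_mul _).integrableOn (hIntK t x)
          hΩopen.measurableSet
        intro y hy
        nlinarith [hJnonneg (σ⁻¹ • (x - y)), hφpos t y (subset_closure hy)]
      rw [integral_const_mul] at hmono
      nlinarith [hJΩle x, hJΩnn x, hfpos t]
    -- the function h and its lower bound
    have hrat : ∀ t : ℝ, deriv (fun s => φ s x) t / φ t x - a t x - lam =
        D / σ ^ ((N : ℝ) + k) * (∫ y in Ω, J (σ⁻¹ • (x - y)) * (φ t y - φ t x)) / φ t x := by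
      intro t
      have hne : φ t x ≠ 0 := (hfpos t).ne'
      rw [heqx t, add_div, mul_div_cancel_right₀ _ hne]
      ring
    have hhlb : ∀ t : ℝ, -(D * B) ≤
        deriv (fun s => φ s x) t / φ t x - a t x - lam := by
      intro t
      rw [hrat t, le_div_iff₀ (hfpos t)]
      have h1 := mul_le_mul_of_nonneg_left (hKlb t)
        (by positivity : (0:ℝ) ≤ D / σ ^ ((N : ℝ) + k))
      have h2 : -(D * B) * φ t x = D / σ ^ ((N : ℝ) + k) * -(σ ^ N * φ t x) := by
        rw [hBdef]; ring
      linarith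
    -- the period integral of the logarithmic derivative vanishes
    have hgd : ∀ t : ℝ, HasDerivAt (fun u => Real.log (φ u x))
        (deriv (fun s => φ s x) t / φ t x) t := by
      intro t
      exact ((hfx1.differentiable one_ne_zero t).hasDerivAt).log (hfpos t).ne'
    have hgc : Continuous (fun t => deriv (fun s => φ s x) t / φ t x) :=
      hdf.div hfc (fun t => (hfpos t).ne')
    have hzero : ∫ t in (0:ℝ)..T, deriv (fun s => φ s x) t / φ t x = 0 := by
      rw [intervalIntegral.integral_eq_sub_of_hasDerivAt (fun t _ => hgd t)
        (hgc.intervalIntegrable 0 T)]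
      have : φ T x = φ 0 x := by simpa using hφper 0 x
      rw [this, sub_self]
    -- splitting the integral
    have hiia : IntervalIntegrable (fun t => a t x) volume 0 T := hax.intervalIntegrable 0 T
    have hii1 : IntervalIntegrable (fun t => deriv (fun s => φ s x) t / φ t x) volume 0 T :=
      hgc.intervalIntegrable 0 T
    have hsplit : ∫ t in (0:ℝ)..T, (deriv (fun s => φ s x) t / φ t x - a t x - lam) =
        -(∫ t in (0:ℝ)..T, a t x) - lam * T := by
      rw [intervalIntegral.integral_sub (hii1.sub hiia) intervalIntegrable_const,
        intervalIntegral.integral_sub hii1 hiia, hzero]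
      simp [mul_comm]
    have hhc : Continuous (fun t => deriv (fun s => φ s x) t / φ t x - a t x - lam) :=
      (hgc.sub hax).sub continuous_const
    -- upper bound on lam
    have hub : lam ≤ -(timeAvg T a x) + D * B := by
      have hlbint : -(D * B) * T ≤
          ∫ t in (0:ℝ)..T, (deriv (fun s => φ s x) t / φ t x - a t x - lam) := by
        have h1 : ∫ t in (0:ℝ)..T, (-(D * B) : ℝ) ≤
            ∫ t in (0:ℝ)..T, (deriv (fun s => φ s x) t / φ t x - a t x - lam) :=
          intervalIntegral.integral_mono_on hT.le intervalIntegrable_const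
            (hhc.intervalIntegrable 0 T) (fun t _ => hhlb t)
        rw [intervalIntegral.integral_const, smul_eq_mul] at h1
        nlinarith [h1]
      rw [hsplit] at hlbint
      rw [timeAvg]
      have h2 : lam * T ≤ -(∫ t in (0:ℝ)..T, a t x) + D * B * T := by nlinarith
      have h3 : lam ≤ (-(∫ t in (0:ℝ)..T, a t x) + D * B * T) / T := (le_div_iff₀ hT).2 h2
      calc lam ≤ (-(∫ t in (0:ℝ)..T, a t x) + D * B * T) / T := h3
        _ = -(1 / T * ∫ t in (0:ℝ)..T, a t x) + D * B := by
            have hTne : T ≠ 0 := hT.ne'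
            field_simp
    refine ⟨hub, ?_, ?_⟩
    · -- temporal Harnack at x
      intro s hs t ht
      have hosc : Real.log (φ t x) - Real.log (φ s x) ≤ M * T := by
        apply osc_lemma hM0 hgd hgc hzero _ hs ht
        intro r
        have h1 := hhlb r
        have h2 := habd r x hx
        rw [abs_le] at h2
        have hDBB : D * B ≤ B := by nlinarith
        rw [hMdef]
        linarith
      have := Real.exp_le_exp.2 (by linarith : Real.log (φ t x) ≤ M * T + Real.log (φ s x))
      rwa [Real.exp_add, Real.exp_log (hfpos t), Real.exp_log (hfpos s)] at this
    · -- lower bound on lam assuming the Harnack premise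
      intro hH
      have hKub : ∀ t ∈ Set.Icc (0:ℝ) T,
          (∫ y in Ω, J (σ⁻¹ • (x - y)) * (φ t y - φ t x)) ≤ σ ^ N * (E * φ t x) := by
        intro t ht
        have hmono : ∫ y in Ω, J (σ⁻¹ • (x - y)) * (φ t y - φ t x) ≤
            ∫ y in Ω, (E * φ t x) * J (σ⁻¹ • (x - y)) := by
          apply setIntegral_mono_on (hIntK t x) ((hJintg x).const_mul _).integrableOn
            hΩopen.measurableSet
          intro y hy
          have h1 : φ t y ≤ E * φ t x := hH t ht y (subset_closure hy)
          nlinarith [hJnonneg (σ⁻¹ • (x - y)), hfpos t]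
        rw [integral_const_mul] at hmono
        have hEφ : 0 ≤ E * φ t x := mul_nonneg (by linarith) (hfpos t).le
        nlinarith [hJΩle x, hJΩnn x]
      have hhub : ∀ t ∈ Set.Icc (0:ℝ) T,
          deriv (fun s => φ s x) t / φ t x - a t x - lam ≤ D * (B * E) := by
        intro t ht
        rw [hrat t, div_le_iff₀ (hfpos t)]
        have h1 := mul_le_mul_of_nonneg_left (hKub t ht)
          (by positivity : (0:ℝ) ≤ D / σ ^ ((N : ℝ) + k))
        have h2 : D * (B * E) * φ t x = D / σ ^ ((N : ℝ) + k) * (σ ^ N * (E * φ t x)) := by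
          rw [hBdef]; ring
        linarith
      have hubint : (∫ t in (0:ℝ)..T, (deriv (fun s => φ s x) t / φ t x - a t x - lam)) ≤
          D * (B * E) * T := by
        have h1 : (∫ t in (0:ℝ)..T, (deriv (fun s => φ s x) t / φ t x - a t x - lam)) ≤
            ∫ t in (0:ℝ)..T, (D * (B * E) : ℝ) :=
          intervalIntegral.integral_mono_on hT.le (hhc.intervalIntegrable 0 T)
            intervalIntegrable_const hhub
        rw [intervalIntegral.integral_const, smul_eq_mul] at h1
        nlinarith [h1]
      rw [hsplit] at hubint
      rw [timeAvg]
      have h2 : -(∫ t in (0:ℝ)..T, a t x) - D * (B * E) * T ≤ lam * T := by nlinarith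
      have h3 : (-(∫ t in (0:ℝ)..T, a t x) - D * (B * E) * T) / T ≤ lam :=
        (div_le_iff₀ hT).2 h2
      calc -(1 / T * ∫ t in (0:ℝ)..T, a t x) - D * (B * E)
          = (-(∫ t in (0:ℝ)..T, a t x) - D * (B * E) * T) / T := by
            have hTne : T ≠ 0 := hT.ne'
            field_simp
        _ ≤ lam := h3
  -- the Harnack point x*
  obtain ⟨xs, hxs, hxsmax⟩ := hclΩ.exists_isMaxOn hclne (hφslice 0)
  have hIcc0 : (0:ℝ) ∈ Set.Icc (0:ℝ) T := ⟨le_refl _, hT.le⟩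
  have hH : ∀ t ∈ Set.Icc (0:ℝ) T, ∀ y ∈ closure Ω, φ t y ≤ E * φ t xs := by
    intro t ht y hy
    have h1 : φ t y ≤ Real.exp (M * T) * φ 0 y := (key y hy).2.1 0 hIcc0 t ht
    have h2 : φ 0 y ≤ φ 0 xs := hxsmax hy
    have h3 : φ 0 xs ≤ Real.exp (M * T) * φ t xs := (key xs hxs).2.1 t ht 0 hIcc0
    have he : 0 < Real.exp (M * T) := Real.exp_pos _
    rw [hEdef]
    nlinarith [hφpos 0 y hy, hφpos t xs hxs]
  have hlow : -(timeAvg T a xs) - D * (B * E) ≤ lam := (key xs hxs).2.2 hH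
  -- bounds on timeAvg
  have habsavg : ∀ x ∈ closure Ω, |timeAvg T a x| ≤ A := by
    intro x hx
    have h1 : ‖∫ t in (0:ℝ)..T, a t x‖ ≤ A * |T - 0| := by
      apply intervalIntegral.norm_integral_le_of_norm_le_const
      intro t ht
      rw [Real.norm_eq_abs]
      exact habd t x hx
    rw [Real.norm_eq_abs, sub_zero, abs_of_pos hT] at h1
    rw [timeAvg, abs_mul, abs_of_pos (by positivity : (0:ℝ) < 1 / T)]
    calc 1 / T * |∫ t in (0:ℝ)..T, a t x| ≤ 1 / T * (A * T) := by
          apply mul_le_mul_of_nonneg_left h1 (by positivity)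
      _ = A := by field_simp
  have hbddAbove : BddAbove (timeAvg T a '' closure Ω) := by
    refine ⟨A, ?_⟩
    rintro y ⟨x, hx, rfl⟩
    exact (abs_le.1 (habsavg x hx)).2
  have hbddBelow : BddBelow (timeAvg T a '' closure Ω) := by
    refine ⟨-A, ?_⟩
    rintro y ⟨x, hx, rfl⟩
    exact (abs_le.1 (habsavg x hx)).1
  constructor
  · have h1 : timeAvg T a xs ≤ sSup (timeAvg T a '' closure Ω) :=
      le_csSup hbddAbove ⟨xs, hxs, rfl⟩
    linarith
  · obtain ⟨x₀, hx₀⟩ := hclne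
    have h2 : sInf (timeAvg T a '' closure Ω) ≤ timeAvg T a x₀ :=
      csInf_le hbddBelow ⟨x₀, hx₀, rfl⟩
    have h3 := (key x₀ hx₀).1
    linarith
end

section
/- Suppose (λ₁, φ₁) is a principal eigenpair of −L. Then the following three conditions are equivalent: (1) λ₁ ≥ 0; (2) there exists φ ∈ X^{++} such that L[φ](t,x) ≤ 0 for all (t,x) ∈ ℝ × cl(Ω); (3) every φ ∈ X with L[φ](t,x) < 0 for all (t,x) ∈ ℝ × cl(Ω) satisfies φ(t,x) > 0 for all (t,x) ∈ ℝ × cl(Ω). -/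
open MeasureTheory Filter Topology

section Aux

variable {N : ℕ} {Ω : Set (EuclideanSpace ℝ (Fin N))}
  {J : EuclideanSpace ℝ (Fin N) → ℝ} {a : ℝ → EuclideanSpace ℝ (Fin N) → ℝ}
  {T D σ k : ℝ}

/-- nlOp of a negated function. -/
lemma nlOp_neg (u : ℝ → EuclideanSpace ℝ (Fin N) → ℝ) (t : ℝ)
    (x : EuclideanSpace ℝ (Fin N)) :
    nlOp Ω J a D σ k (fun t x => -(u t x)) t x = -(nlOp Ω J a D σ k u t x) := by
  unfold nlOp
  have h1 : deriv (fun s => -(u s x)) t = -(deriv (fun s => u s x) t) := deriv.neg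
  have h2 : (∫ y in Ω, J (σ⁻¹ • (x - y)) * (-(u t y) - -(u t x)))
      = -∫ y in Ω, J (σ⁻¹ • (x - y)) * (u t y - u t x) := by
    rw [← MeasureTheory.integral_neg]
    congr 1
    funext y
    ring
  rw [h1, h2]
  ring

/-- Core lemma: touching-point estimate for the ratio minimum. -/
lemma core_lemma
    (hΩne : Ω.Nonempty) (hΩopen : IsOpen Ω) (hΩbdd : Bornology.IsBounded Ω)
    (hJcont : Continuous J) (hJnonneg : ∀ x, 0 ≤ J x)
    (hT : 0 < T) (hD : 0 < D) (hσ : 0 < σ)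
    {lam : ℝ} {φ₁ : ℝ → EuclideanSpace ℝ (Fin N) → ℝ}
    (heig : isPEigenpair Ω J a T D σ k lam φ₁)
    (φ : ℝ → EuclideanSpace ℝ (Fin N) → ℝ) (hφ : memX Ω T φ) :
    ∃ m t₀ x₀, t₀ ∈ Set.Icc (0:ℝ) T ∧ x₀ ∈ closure Ω ∧
      m = φ t₀ x₀ / φ₁ t₀ x₀ ∧
      (∀ t : ℝ, ∀ x ∈ closure Ω, m * φ₁ t x ≤ φ t x) ∧
      0 ≤ nlOp Ω J a D σ k φ t₀ x₀ + m * lam * φ₁ t₀ x₀ := by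
  obtain ⟨⟨⟨hφ₁c, hφ₁d, hφ₁per⟩, hφ₁pos⟩, heq⟩ := heig
  obtain ⟨hφc, hφd, hφper⟩ := hφ
  have hK : IsCompact (closure Ω) := hΩbdd.isCompact_closure
  obtain ⟨z, hzΩ⟩ := hΩne
  set C : Set (ℝ × EuclideanSpace ℝ (Fin N)) := Set.Icc 0 T ×ˢ closure Ω with hCdef
  have hCcomp : IsCompact C := isCompact_Icc.prod hK
  have hCne : C.Nonempty := ⟨(0, z), ⟨Set.left_mem_Icc.mpr hT.le, subset_closure hzΩ⟩⟩
  have hsub : C ⊆ Set.univ ×ˢ closure Ω := fun p hp => ⟨trivial, hp.2⟩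
  have hwcont : ContinuousOn (fun p : ℝ × EuclideanSpace ℝ (Fin N) =>
      φ p.1 p.2 / φ₁ p.1 p.2) C :=
    (hφc.mono hsub).div (hφ₁c.mono hsub)
      (fun p hp => (hφ₁pos p.1 p.2 hp.2).ne')
  obtain ⟨p₀, hp₀C, hmin⟩ := hCcomp.exists_isMinOn hCne hwcont
  set t₀ := p₀.1
  set x₀ := p₀.2
  have ht₀ : t₀ ∈ Set.Icc (0:ℝ) T := hp₀C.1
  have hx₀ : x₀ ∈ closure Ω := hp₀C.2
  set m : ℝ := φ t₀ x₀ / φ₁ t₀ x₀ with hmdef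
  set ψ : ℝ → EuclideanSpace ℝ (Fin N) → ℝ := fun t x => φ t x - m * φ₁ t x with hψdef
  -- global nonnegativity of ψ on ℝ × closure Ω
  have hψnonneg : ∀ t : ℝ, ∀ x ∈ closure Ω, 0 ≤ ψ t x := by
    intro t x hx
    have hper : Function.Periodic (fun s => ψ s x) T := by
      intro s; simp only [hψdef, hφper, hφ₁per]
    obtain ⟨t', ht', heqv⟩ := hper.exists_mem_Ico₀ hT t
    rw [heqv]
    have hmem : ((t', x) : ℝ × EuclideanSpace ℝ (Fin N)) ∈ C :=
      ⟨⟨ht'.1, ht'.2.le⟩, hx⟩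
    have hle : m ≤ φ t' x / φ₁ t' x := hmin hmem
    have hpos := hφ₁pos t' x hx
    have := (le_div_iff₀ hpos).mp hle
    simp only [hψdef]
    linarith
  have hψ0 : ψ t₀ x₀ = 0 := by
    simp only [hψdef, hmdef]
    rw [div_mul_cancel₀ _ (hφ₁pos t₀ x₀ hx₀).ne']
    ring
  -- derivative vanishes at the touching point
  have hder0 : deriv (fun s => ψ s x₀) t₀ = 0 := by
    have hlm : IsLocalMin (fun s => ψ s x₀) t₀ :=
      Filter.Eventually.of_forall fun s => by
        show ψ t₀ x₀ ≤ ψ s x₀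
        rw [hψ0]; exact hψnonneg s x₀ hx₀
    exact hlm.deriv_eq_zero
  -- integrability
  have hint : ∀ (u : ℝ → EuclideanSpace ℝ (Fin N) → ℝ),
      ContinuousOn (fun p : ℝ × EuclideanSpace ℝ (Fin N) => u p.1 p.2)
        (Set.univ ×ˢ closure Ω) →
      MeasureTheory.IntegrableOn
        (fun y => J (σ⁻¹ • (x₀ - y)) * (u t₀ y - u t₀ x₀)) Ω := by
    intro u hu
    have hcu : ContinuousOn (fun y => u t₀ y) (closure Ω) := by
      have hmap : Set.MapsTo (fun y : EuclideanSpace ℝ (Fin N) => ((t₀, y) : ℝ × EuclideanSpace ℝ (Fin N)))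
          (closure Ω) (Set.univ ×ˢ closure Ω) := fun y hy => ⟨trivial, hy⟩
      exact hu.comp (Continuous.continuousOn (by fun_prop)) hmap
    have hcont : ContinuousOn (fun y => J (σ⁻¹ • (x₀ - y)) * (u t₀ y - u t₀ x₀))
        (closure Ω) :=
      ((hJcont.comp (by fun_prop)).continuousOn).mul (hcu.sub continuousOn_const)
    exact (hcont.integrableOn_compact hK).mono_set subset_closure
  have hintφ := hint φ hφc
  have hintφ₁ := hint φ₁ hφ₁c
  -- linearity of nlOp at the touching point
  have hdφ : DifferentiableAt ℝ (fun s => φ s x₀) t₀ :=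
    ((hφd x₀ hx₀).differentiable one_ne_zero).differentiableAt
  have hdφ₁ : DifferentiableAt ℝ (fun s => φ₁ s x₀) t₀ :=
    ((hφ₁d x₀ hx₀).differentiable one_ne_zero).differentiableAt
  have hlin : nlOp Ω J a D σ k ψ t₀ x₀
      = nlOp Ω J a D σ k φ t₀ x₀ - m * nlOp Ω J a D σ k φ₁ t₀ x₀ := by
    unfold nlOp
    have hder : deriv (fun s => ψ s x₀) t₀
        = deriv (fun s => φ s x₀) t₀ - m * deriv (fun s => φ₁ s x₀) t₀ := by
      have : (fun s => ψ s x₀) = fun s => φ s x₀ - m * φ₁ s x₀ := rfl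
      rw [this, deriv_fun_sub hdφ (hdφ₁.const_mul m), deriv_const_mul m hdφ₁]
    have hI : (∫ y in Ω, J (σ⁻¹ • (x₀ - y)) * (ψ t₀ y - ψ t₀ x₀))
        = (∫ y in Ω, J (σ⁻¹ • (x₀ - y)) * (φ t₀ y - φ t₀ x₀))
          - m * ∫ y in Ω, J (σ⁻¹ • (x₀ - y)) * (φ₁ t₀ y - φ₁ t₀ x₀) := by
      rw [← MeasureTheory.integral_const_mul,
        ← MeasureTheory.integral_sub hintφ (hintφ₁.const_mul m)]
      congr 1
      funext y
      simp only [hψdef]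
      ring
    rw [hder, hI]
    simp only [hψdef]
    ring
  -- positivity of nlOp ψ at the touching point
  have hcoef : 0 < D / σ ^ ((N : ℝ) + k) :=
    div_pos hD (Real.rpow_pos_of_pos hσ _)
  have hIψ : 0 ≤ ∫ y in Ω, J (σ⁻¹ • (x₀ - y)) * (ψ t₀ y - ψ t₀ x₀) := by
    apply MeasureTheory.setIntegral_nonneg hΩopen.measurableSet
    intro y hy
    rw [hψ0, sub_zero]
    exact mul_nonneg (hJnonneg _) (hψnonneg t₀ y (subset_closure hy))
  have hLψ : 0 ≤ nlOp Ω J a D σ k ψ t₀ x₀ := by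
    have hval : nlOp Ω J a D σ k ψ t₀ x₀
        = (D / σ ^ ((N : ℝ) + k)) * ∫ y in Ω, J (σ⁻¹ • (x₀ - y)) * (ψ t₀ y - ψ t₀ x₀) := by
      unfold nlOp
      rw [hder0, hψ0]
      ring
    rw [hval]
    exact mul_nonneg hcoef.le hIψ
  have hEφ₁ : nlOp Ω J a D σ k φ₁ t₀ x₀ = -(lam * φ₁ t₀ x₀) := by
    have := heq t₀ x₀ hx₀; linarith
  refine ⟨m, t₀, x₀, ht₀, hx₀, rfl, ?_, ?_⟩
  · intro t x hx
    have := hψnonneg t x hx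
    simp only [hψdef] at this
    linarith
  · rw [hlin, hEφ₁] at hLψ
    nlinarith [hLψ]

end Aux

theorem maximum_principle_characterization
    (N : ℕ) (hN : 1 ≤ N)
    (Ω : Set (EuclideanSpace ℝ (Fin N)))
    (hΩne : Ω.Nonempty) (hΩopen : IsOpen Ω) (hΩbdd : Bornology.IsBounded Ω)
    (hΩconn : IsConnected Ω)
    (J : EuclideanSpace ℝ (Fin N) → ℝ)
    (hJcont : Continuous J) (hJnonneg : ∀ x, 0 ≤ J x)
    (γ : ℝ) (hγ : 0 < γ)
    (hJsupp : Function.support J ⊆ Metric.ball (0 : EuclideanSpace ℝ (Fin N)) γ)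
    (hJ0 : 0 < J 0) (hJint : ∫ x, J x = 1)
    (T : ℝ) (hT : 0 < T)
    (a : ℝ → EuclideanSpace ℝ (Fin N) → ℝ)
    (hacont : Continuous fun p : ℝ × EuclideanSpace ℝ (Fin N) => a p.1 p.2)
    (haper : ∀ t x, a (t + T) x = a t x)
    (D σ k : ℝ) (hD : 0 < D) (hσ : 0 < σ) (hk : 0 ≤ k)
    (lam : ℝ) (φ₁ : ℝ → EuclideanSpace ℝ (Fin N) → ℝ)
    (heig : isPEigenpair Ω J a T D σ k lam φ₁) :
    (0 ≤ lam ↔ ∃ φ, memXpp Ω T φ ∧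
        ∀ t : ℝ, ∀ x ∈ closure Ω, nlOp Ω J a D σ k φ t x ≤ 0) ∧
      (0 ≤ lam ↔ ∀ φ, memX Ω T φ →
        (∀ t : ℝ, ∀ x ∈ closure Ω, nlOp Ω J a D σ k φ t x < 0) →
        ∀ t : ℝ, ∀ x ∈ closure Ω, 0 < φ t x) := by
  obtain ⟨z, hzΩ⟩ := hΩne
  have hzcl : z ∈ closure Ω := subset_closure hzΩ
  obtain ⟨⟨⟨hφ₁c, hφ₁d, hφ₁per⟩, hφ₁pos⟩, heq⟩ := heig
  have heig' : isPEigenpair Ω J a T D σ k lam φ₁ :=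
    ⟨⟨⟨hφ₁c, hφ₁d, hφ₁per⟩, hφ₁pos⟩, heq⟩
  constructor
  · constructor
    · intro hlam
      refine ⟨φ₁, ⟨⟨hφ₁c, hφ₁d, hφ₁per⟩, hφ₁pos⟩, fun t x hx => ?_⟩
      have h1 := heq t x hx
      have h2 : 0 ≤ lam * φ₁ t x := mul_nonneg hlam (hφ₁pos t x hx).le
      linarith
    · rintro ⟨φ, ⟨hφX, hφpos⟩, hφle⟩
      obtain ⟨m, t₀, x₀, ht₀, hx₀, hmdef, hglob, hkey⟩ :=
        core_lemma ⟨z, hzΩ⟩ hΩopen hΩbdd hJcont hJnonneg hT hD hσ heig' φ hφX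
      have hm : 0 < m := by
        rw [hmdef]
        exact div_pos (hφpos t₀ x₀ hx₀) (hφ₁pos t₀ x₀ hx₀)
      have hL := hφle t₀ x₀ hx₀
      have hp := hφ₁pos t₀ x₀ hx₀
      nlinarith [mul_pos hm hp]
  · constructor
    · intro hlam φ hφX hφlt t x hx
      obtain ⟨m, t₀, x₀, ht₀, hx₀, hmdef, hglob, hkey⟩ :=
        core_lemma ⟨z, hzΩ⟩ hΩopen hΩbdd hJcont hJnonneg hT hD hσ heig' φ hφX
      have hL := hφlt t₀ x₀ hx₀
      have hp := hφ₁pos t₀ x₀ hx₀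
      have hml : 0 < m * lam := by nlinarith
      have hm : 0 < m := by
        rcases lt_or_ge 0 m with h | h
        · exact h
        · nlinarith
      have := hglob t x hx
      have := hφ₁pos t x hx
      nlinarith
    · intro hMP
      by_contra hlam
      push_neg at hlam
      have hψX : memX Ω T (fun t x => -(φ₁ t x)) := by
        refine ⟨hφ₁c.neg, fun x hx => (hφ₁d x hx).neg, fun t x => by simp [hφ₁per]⟩
      have hψlt : ∀ t : ℝ, ∀ x ∈ closure Ω,
          nlOp Ω J a D σ k (fun t x => -(φ₁ t x)) t x < 0 := by
        intro t x hx
        rw [nlOp_neg]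
        have h1 := heq t x hx
        have h2 : lam * φ₁ t x < 0 := mul_neg_of_neg_of_pos hlam (hφ₁pos t x hx)
        linarith
      have := hMP _ hψX hψlt 0 z hzcl
      have := hφ₁pos 0 z hzcl
      linarith
end

section
/- Suppose (λ₁, φ₁) is a principal eigenpair of −L. Then λ₁ > 0 if and only if there exists φ ∈ X^{+} such that L[φ](t,x) < 0 for all (t,x) ∈ ℝ × cl(Ω). -/
open MeasureTheory Filter Topology

theorem strict_maximum_principle_characterization
    (N : ℕ) (hN : 1 ≤ N)
    (Ω : Set (EuclideanSpace ℝ (Fin N)))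
    (hΩne : Ω.Nonempty) (hΩopen : IsOpen Ω) (hΩbdd : Bornology.IsBounded Ω)
    (hΩconn : IsConnected Ω)
    (J : EuclideanSpace ℝ (Fin N) → ℝ)
    (hJcont : Continuous J) (hJnonneg : ∀ x, 0 ≤ J x)
    (γ : ℝ) (hγ : 0 < γ)
    (hJsupp : Function.support J ⊆ Metric.ball (0 : EuclideanSpace ℝ (Fin N)) γ)
    (hJ0 : 0 < J 0) (hJint : ∫ x, J x = 1)
    (T : ℝ) (hT : 0 < T)
    (a : ℝ → EuclideanSpace ℝ (Fin N) → ℝ)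
    (hacont : Continuous fun p : ℝ × EuclideanSpace ℝ (Fin N) => a p.1 p.2)
    (haper : ∀ t x, a (t + T) x = a t x)
    (D σ k : ℝ) (hD : 0 < D) (hσ : 0 < σ) (hk : 0 ≤ k)
    (lam : ℝ) (φ₁ : ℝ → EuclideanSpace ℝ (Fin N) → ℝ)
    (heig : isPEigenpair Ω J a T D σ k lam φ₁) :
    0 < lam ↔ ∃ φ, memX Ω T φ ∧ (∀ t : ℝ, ∀ x ∈ closure Ω, 0 ≤ φ t x) ∧
      ∀ t : ℝ, ∀ x ∈ closure Ω, nlOp Ω J a D σ k φ t x < 0 := by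
  obtain ⟨⟨⟨h1cont, h1diff, h1per⟩, h1pos⟩, h1eq⟩ := heig
  have hclK : IsCompact (closure Ω) := hΩbdd.isCompact_closure
  constructor
  · intro hlam
    refine ⟨φ₁, ⟨h1cont, h1diff, h1per⟩, fun t x hx => (h1pos t x hx).le, fun t x hx => ?_⟩
    have h := h1eq t x hx
    nlinarith [mul_pos hlam (h1pos t x hx)]
  · rintro ⟨φ, ⟨hcont, hdiff, hper⟩, hnn, hneg⟩
    by_contra hlam
    push_neg at hlam
    -- integrability of the kernel integrand
    have hint : ∀ (u : ℝ → EuclideanSpace ℝ (Fin N) → ℝ),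
        ContinuousOn (fun p : ℝ × EuclideanSpace ℝ (Fin N) => u p.1 p.2)
          (Set.univ ×ˢ closure Ω) →
        ∀ t : ℝ, ∀ x ∈ closure Ω,
        IntegrableOn (fun y => J (σ⁻¹ • (x - y)) * (u t y - u t x)) Ω := by
      intro u hu t x hx
      have hcu : ContinuousOn (fun y => u t y) (closure Ω) := by
        have : ContinuousOn ((fun p : ℝ × EuclideanSpace ℝ (Fin N) => u p.1 p.2) ∘
            (fun y => ((t : ℝ), y))) (closure Ω) :=
          hu.comp (continuous_const.prodMk continuous_id).continuousOn
            (fun y hy => Set.mem_prod.mpr ⟨Set.mem_univ _, hy⟩)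
        exact this
      have hcf : ContinuousOn (fun y => J (σ⁻¹ • (x - y)) * (u t y - u t x)) (closure Ω) :=
        ((show Continuous (fun y => J (σ⁻¹ • (x - y))) from hJcont.comp (by fun_prop)).continuousOn).mul
          (hcu.sub continuousOn_const)
      exact (hcf.integrableOn_compact hclK).mono_set subset_closure
    -- the quotient φ / φ₁ attains its minimum on [0,T] × closure Ω
    set K : Set (ℝ × EuclideanSpace ℝ (Fin N)) := Set.Icc (0:ℝ) T ×ˢ closure Ω with hK
    have hKcomp : IsCompact K := isCompact_Icc.prod hclK
    have hKne : K.Nonempty := ⟨(0, hΩne.choose), Set.mem_prod.mpr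
      ⟨Set.mem_Icc.mpr ⟨le_refl 0, hT.le⟩, subset_closure hΩne.choose_spec⟩⟩
    have hKsub : K ⊆ Set.univ ×ˢ closure Ω := fun p hp =>
      Set.mem_prod.mpr ⟨Set.mem_univ _, (Set.mem_prod.mp hp).2⟩
    have hqcont : ContinuousOn (fun p : ℝ × EuclideanSpace ℝ (Fin N) =>
        φ p.1 p.2 / φ₁ p.1 p.2) K :=
      (hcont.mono hKsub).div (h1cont.mono hKsub)
        (fun p hp => (h1pos p.1 p.2 (Set.mem_prod.mp hp).2).ne')
    obtain ⟨p₀, hp₀K, hp₀min⟩ := hKcomp.exists_isMinOn hKne hqcont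
    obtain ⟨t₀, x₀⟩ := p₀
    have ht₀ : t₀ ∈ Set.Icc (0:ℝ) T := (Set.mem_prod.mp hp₀K).1
    have hx₀ : x₀ ∈ closure Ω := (Set.mem_prod.mp hp₀K).2
    set μ : ℝ := φ t₀ x₀ / φ₁ t₀ x₀ with hμdef
    have hμ0 : 0 ≤ μ := div_nonneg (hnn t₀ x₀ hx₀) (h1pos t₀ x₀ hx₀).le
    -- key comparison on [0,T] extended by periodicity to all times
    have hbound : ∀ t : ℝ, ∀ x ∈ closure Ω, μ * φ₁ t x ≤ φ t x := by
      intro t x hx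
      have hmain : ∀ s ∈ Set.Icc (0:ℝ) T, μ * φ₁ s x ≤ φ s x := by
        intro s hs
        have hmem : ((s, x) : ℝ × EuclideanSpace ℝ (Fin N)) ∈ K :=
          Set.mem_prod.mpr ⟨hs, hx⟩
        have := hp₀min hmem
        exact (le_div_iff₀ (h1pos s x hx)).mp this
      set n : ℤ := ⌊t / T⌋ with hn
      set s : ℝ := t - n * T with hs
      have hfr : s = T * Int.fract (t / T) := by
        rw [Int.fract]
        field_simp [hs]
        ring
      have hs0 : 0 ≤ s := by
        rw [hfr]; exact mul_nonneg hT.le (Int.fract_nonneg _)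
      have hs1 : s ≤ T := by
        rw [hfr]
        calc T * Int.fract (t / T) ≤ T * 1 :=
              mul_le_mul_of_nonneg_left (Int.fract_lt_one _).le hT.le
          _ = T := mul_one T
      have hpφ : Function.Periodic (fun u => φ u x) T := fun u => hper u x
      have hpφ₁ : Function.Periodic (fun u => φ₁ u x) T := fun u => h1per u x
      have hperφ : φ s x = φ t x := hpφ.sub_int_mul_eq n
      have hperφ₁ : φ₁ s x = φ₁ t x := hpφ₁.sub_int_mul_eq n
      calc μ * φ₁ t x = μ * φ₁ s x := by rw [hperφ₁]
        _ ≤ φ s x := hmain s ⟨hs0, hs1⟩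
        _ = φ t x := hperφ
    have hzero : μ * φ₁ t₀ x₀ = φ t₀ x₀ :=
      div_mul_cancel₀ _ (h1pos t₀ x₀ hx₀).ne'
    -- derivative identity at the minimum point
    have hdφ : DifferentiableAt ℝ (fun s => φ s x₀) t₀ :=
      ((hdiff x₀ hx₀).differentiable one_ne_zero).differentiableAt
    have hdφ₁ : DifferentiableAt ℝ (fun s => φ₁ s x₀) t₀ :=
      ((h1diff x₀ hx₀).differentiable one_ne_zero).differentiableAt
    have hminloc : IsLocalMin (fun s => φ s x₀ - μ * φ₁ s x₀) t₀ := by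
      have : IsMinOn (fun s => φ s x₀ - μ * φ₁ s x₀) Set.univ t₀ := by
        refine isMinOn_univ_iff.mpr fun s => ?_
        show φ t₀ x₀ - μ * φ₁ t₀ x₀ ≤ φ s x₀ - μ * φ₁ s x₀
        have h1 := hbound s x₀ hx₀
        linarith [hzero]
      exact this.isLocalMin Filter.univ_mem
    have hderiv0 : deriv (fun s => φ s x₀ - μ * φ₁ s x₀) t₀ = 0 :=
      hminloc.deriv_eq_zero
    have hderiv : deriv (fun s => φ s x₀) t₀ = μ * deriv (fun s => φ₁ s x₀) t₀ := by
      rw [deriv_fun_sub hdφ (hdφ₁.const_mul μ), deriv_const_mul μ hdφ₁] at hderiv0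
      linarith
    -- integral comparison
    have hintφ := hint φ hcont t₀ x₀ hx₀
    have hintφ₁ := hint φ₁ h1cont t₀ x₀ hx₀
    have hI : μ * (∫ y in Ω, J (σ⁻¹ • (x₀ - y)) * (φ₁ t₀ y - φ₁ t₀ x₀))
        ≤ ∫ y in Ω, J (σ⁻¹ • (x₀ - y)) * (φ t₀ y - φ t₀ x₀) := by
      rw [← integral_const_mul]
      refine setIntegral_mono_on (hintφ₁.const_mul μ) hintφ hΩopen.measurableSet ?_
      intro y hy
      have h1 := hbound t₀ y (subset_closure hy)
      have h2 := hzero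
      have h3 := hJnonneg (σ⁻¹ • (x₀ - y))
      nlinarith [mul_nonneg h3 (sub_nonneg.mpr h1)]
    -- combine everything into a contradiction
    have hC : 0 < D / σ ^ ((N : ℝ) + k) :=
      div_pos hD (Real.rpow_pos_of_pos hσ _)
    have heq := h1eq t₀ x₀ hx₀
    have hne := hneg t₀ x₀ hx₀
    rw [nlOp] at heq hne
    rw [hderiv] at hne
    set C := D / σ ^ ((N : ℝ) + k)
    set I₁ := ∫ y in Ω, J (σ⁻¹ • (x₀ - y)) * (φ₁ t₀ y - φ₁ t₀ x₀)
    set Iφ := ∫ y in Ω, J (σ⁻¹ • (x₀ - y)) * (φ t₀ y - φ t₀ x₀)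
    have hp₁ := h1pos t₀ x₀ hx₀
    have h1 : C * (μ * I₁) ≤ C * Iφ := mul_le_mul_of_nonneg_left hI hC.le
    have h2 : 0 ≤ μ * (-lam) * φ₁ t₀ x₀ :=
      mul_nonneg (mul_nonneg hμ0 (neg_nonneg.mpr hlam)) hp₁.le
    have h3 : μ * (-deriv (fun s => φ₁ s x₀) t₀ + C * I₁ + a t₀ x₀ * φ₁ t₀ x₀
        + lam * φ₁ t₀ x₀) = 0 := by rw [heq, mul_zero]
    have h4 : a t₀ x₀ * φ t₀ x₀ = a t₀ x₀ * (μ * φ₁ t₀ x₀) := by rw [hzero]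
    nlinarith [h1, h2, h3, h4, hne]
end

section
/- Suppose J is symmetric with respect to each component. Then for every continuous function u : ℝ^N → ℝ with u(x) > 0 for all x ∈ cl(Ω), one has ∫_Ω ∫_Ω J(x−y) (u(y)/u(x) − 1) dy dx = (1/2) ∫_Ω ∫_Ω J(x−y) (√(u(y)/u(x)) − √(u(x)/u(y)))² dy dx; in particular, ∫_Ω ∫_Ω J(x−y)(u(y)/u(x) − 1) dy dx ≥ 0. -/
open MeasureTheory

private lemma sqrt_diff_sq {a b : ℝ} (ha : 0 < a) (hb : 0 < b) :
    (Real.sqrt (b / a) - Real.sqrt (a / b)) ^ 2 = (b / a - 1) + (a / b - 1) := by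
  have h1 : Real.sqrt (b / a) ^ 2 = b / a := Real.sq_sqrt (by positivity)
  have h2 : Real.sqrt (a / b) ^ 2 = a / b := Real.sq_sqrt (by positivity)
  have h3 : Real.sqrt (b / a) * Real.sqrt (a / b) = 1 := by
    rw [← Real.sqrt_mul (by positivity)]
    have : b / a * (a / b) = 1 := by field_simp
    rw [this, Real.sqrt_one]
  have e : (Real.sqrt (b / a) - Real.sqrt (a / b)) ^ 2
      = Real.sqrt (b / a) ^ 2 + Real.sqrt (a / b) ^ 2
        - 2 * (Real.sqrt (b / a) * Real.sqrt (a / b)) := by ring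
  rw [e, h1, h2, h3]; ring

private lemma J_even {N : ℕ} (J : EuclideanSpace ℝ (Fin N) → ℝ)
    (hJsym : ∀ (i : Fin N) (x : EuclideanSpace ℝ (Fin N)),
      J (WithLp.toLp 2 (Function.update x i (-(x i)))) = J x) :
    ∀ x, J (-x) = J x := by
  classical
  have key : ∀ s : Finset (Fin N), ∀ x : EuclideanSpace ℝ (Fin N),
      J (WithLp.toLp 2 (fun i => if i ∈ s then -(x i) else x i)) = J x := by
    intro s
    induction s using Finset.induction_on with
    | empty =>
      intro x
      have : (WithLp.toLp 2 (fun i => if i ∈ (∅ : Finset (Fin N)) then -(x i) else x i) : EuclideanSpace ℝ (Fin N)) = x := by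
        ext i; simp
      rw [this]
    | @insert a s ha ih =>
      intro x
      have hy : (WithLp.toLp 2 (fun i => if i ∈ insert a s then -(x i) else x i) : EuclideanSpace ℝ (Fin N))
          = WithLp.toLp 2 (Function.update
              (WithLp.toLp 2 (fun i => if i ∈ s then -(x i) else x i) : EuclideanSpace ℝ (Fin N)) a
              (-((WithLp.toLp 2 (fun i => if i ∈ s then -(x i) else x i) : EuclideanSpace ℝ (Fin N)) a))) := by
        congr 1
        funext i
        by_cases hi : i = a
        · subst hi; simp [ha]
        · simp [Function.update_of_ne hi, Finset.mem_insert, hi]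
      rw [hy, hJsym a, ih]
  intro x
  have h := key Finset.univ x
  simp only [Finset.mem_univ, if_true] at h
  exact h

theorem double_integral_ratio_identity
    (N : ℕ) (hN : 1 ≤ N)
    (Ω : Set (EuclideanSpace ℝ (Fin N)))
    (hΩne : Ω.Nonempty) (hΩopen : IsOpen Ω) (hΩbdd : Bornology.IsBounded Ω)
    (hΩconn : IsConnected Ω)
    (J : EuclideanSpace ℝ (Fin N) → ℝ)
    (hJcont : Continuous J) (hJnonneg : ∀ x, 0 ≤ J x)
    (γ : ℝ) (hγ : 0 < γ)
    (hJsupp : Function.support J ⊆ Metric.ball (0 : EuclideanSpace ℝ (Fin N)) γ)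
    (hJ0 : 0 < J 0) (hJint : ∫ x, J x = 1)
    (hJsym : ∀ (i : Fin N) (x : EuclideanSpace ℝ (Fin N)),
      J (WithLp.toLp 2 (Function.update x i (-(x i)))) = J x)
    (u : EuclideanSpace ℝ (Fin N) → ℝ) (hucont : Continuous u)
    (hupos : ∀ x ∈ closure Ω, 0 < u x) :
    (∫ x in Ω, ∫ y in Ω, J (x - y) * (u y / u x - 1))
        = (1 / 2) * ∫ x in Ω, ∫ y in Ω,
            J (x - y) * (Real.sqrt (u y / u x) - Real.sqrt (u x / u y)) ^ 2 ∧
      0 ≤ ∫ x in Ω, ∫ y in Ω, J (x - y) * (u y / u x - 1) := by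
  have hJeven : ∀ x, J (-x) = J x := J_even J hJsym
  classical
  have hmeas : MeasurableSet Ω := hΩopen.measurableSet
  have hclcomp : IsCompact (closure Ω) := hΩbdd.isCompact_closure
  have hK : IsCompact (closure Ω ×ˢ closure Ω) := hclcomp.prod hclcomp
  -- continuity of the two integrands on the compact closure square
  have hfc : ContinuousOn
      (fun p : EuclideanSpace ℝ (Fin N) × EuclideanSpace ℝ (Fin N) =>
        J (p.1 - p.2) * (u p.2 / u p.1 - 1)) (closure Ω ×ˢ closure Ω) := by
    apply ContinuousOn.mul
    · exact (hJcont.comp (continuous_fst.sub continuous_snd)).continuousOn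
    · exact ((hucont.comp continuous_snd).continuousOn.div
        (hucont.comp continuous_fst).continuousOn
        (fun p hp => (hupos p.1 hp.1).ne')).sub continuousOn_const
  have hgc : ContinuousOn
      (fun p : EuclideanSpace ℝ (Fin N) × EuclideanSpace ℝ (Fin N) =>
        J (p.1 - p.2) * (u p.1 / u p.2 - 1)) (closure Ω ×ˢ closure Ω) := by
    apply ContinuousOn.mul
    · exact (hJcont.comp (continuous_fst.sub continuous_snd)).continuousOn
    · exact ((hucont.comp continuous_fst).continuousOn.div
        (hucont.comp continuous_snd).continuousOn
        (fun p hp => (hupos p.2 hp.2).ne')).sub continuousOn_const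
  -- integrability on the product of restricted measures
  have hprodsub : Ω ×ˢ Ω ⊆ closure Ω ×ˢ closure Ω :=
    Set.prod_mono subset_closure subset_closure
  have hfint : Integrable
      (Function.uncurry fun x y => J (x - y) * (u y / u x - 1))
      ((volume.restrict Ω).prod (volume.restrict Ω)) := by
    rw [Measure.prod_restrict]
    exact ((hfc.integrableOn_compact hK).mono_set hprodsub)
  have hgint : Integrable
      (Function.uncurry fun x y => J (x - y) * (u x / u y - 1))
      ((volume.restrict Ω).prod (volume.restrict Ω)) := by
    rw [Measure.prod_restrict]
    exact ((hgc.integrableOn_compact hK).mono_set hprodsub)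
  -- swap: B = A
  have hswap : (∫ x in Ω, ∫ y in Ω, J (x - y) * (u x / u y - 1))
      = ∫ x in Ω, ∫ y in Ω, J (x - y) * (u y / u x - 1) := by
    rw [integral_integral_swap hfint]
    apply setIntegral_congr_fun hmeas
    intro x hx
    apply setIntegral_congr_fun hmeas
    intro y hy
    have hJ : J (y - x) = J (x - y) := by
      have := hJeven (x - y); rwa [neg_sub] at this
    simp only [hJ]
  -- inner integrability for fixed x
  have hinner_f : ∀ x ∈ Ω, IntegrableOn
      (fun y => J (x - y) * (u y / u x - 1)) Ω volume := by
    intro x hx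
    apply (ContinuousOn.integrableOn_compact hclcomp ?_).mono_set subset_closure
    exact ((hJcont.comp (continuous_const.sub continuous_id)).continuousOn).mul
      ((hucont.continuousOn.div continuousOn_const
        (fun y hy => (hupos x (subset_closure hx)).ne')).sub continuousOn_const)
  have hinner_g : ∀ x ∈ Ω, IntegrableOn
      (fun y => J (x - y) * (u x / u y - 1)) Ω volume := by
    intro x hx
    apply (ContinuousOn.integrableOn_compact hclcomp ?_).mono_set subset_closure
    exact ((hJcont.comp (continuous_const.sub continuous_id)).continuousOn).mul
      ((continuousOn_const.div hucont.continuousOn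
        (fun y hy => (hupos y hy).ne')).sub continuousOn_const)
  -- pointwise split of the square integrand and inner additivity
  have hsum_inner : ∀ x ∈ Ω,
      (∫ y in Ω, J (x - y) * (Real.sqrt (u y / u x) - Real.sqrt (u x / u y)) ^ 2)
      = (∫ y in Ω, J (x - y) * (u y / u x - 1))
        + ∫ y in Ω, J (x - y) * (u x / u y - 1) := by
    intro x hx
    rw [← integral_add (hinner_f x hx) (hinner_g x hx)]
    apply setIntegral_congr_fun hmeas
    intro y hy
    have hux : 0 < u x := hupos x (subset_closure hx)
    have huy : 0 < u y := hupos y (subset_closure hy)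
    dsimp only
    rw [sqrt_diff_sq hux huy]
    ring
  -- outer additivity
  have houter :
      (∫ x in Ω, ∫ y in Ω,
        J (x - y) * (Real.sqrt (u y / u x) - Real.sqrt (u x / u y)) ^ 2)
      = (∫ x in Ω, ∫ y in Ω, J (x - y) * (u y / u x - 1))
        + ∫ x in Ω, ∫ y in Ω, J (x - y) * (u x / u y - 1) := by
    have hF : Integrable (fun x => ∫ y in Ω, J (x - y) * (u y / u x - 1))
        (volume.restrict Ω) := by
      simpa [Function.uncurry] using hfint.integral_prod_left
    have hG : Integrable (fun x => ∫ y in Ω, J (x - y) * (u x / u y - 1))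
        (volume.restrict Ω) := by
      simpa [Function.uncurry] using hgint.integral_prod_left
    rw [← integral_add hF hG]
    apply setIntegral_congr_fun hmeas
    intro x hx
    dsimp only [Function.uncurry]
    exact hsum_inner x hx
  have hsq_nonneg : 0 ≤ ∫ x in Ω, ∫ y in Ω,
      J (x - y) * (Real.sqrt (u y / u x) - Real.sqrt (u x / u y)) ^ 2 := by
    apply setIntegral_nonneg hmeas
    intro x hx
    apply setIntegral_nonneg hmeas
    intro y hy
    exact mul_nonneg (hJnonneg _) (sq_nonneg _)
  have hmain : (∫ x in Ω, ∫ y in Ω, J (x - y) * (u y / u x - 1))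
      = (1 / 2) * ∫ x in Ω, ∫ y in Ω,
          J (x - y) * (Real.sqrt (u y / u x) - Real.sqrt (u x / u y)) ^ 2 := by
    rw [houter, hswap]; ring
  exact ⟨hmain, by rw [hmain]; positivity⟩
end

section
/- If (λ, φ) is a principal eigenpair of −L (for given parameters D > 0, σ > 0, k ≥ 0), then λ < min_{x ∈ cl(Ω)} [ (D/σ^{N+k}) ∫_Ω J((x−y)/σ) dy − a_T(x) ]. -/
open MeasureTheory Filter Topology

theorem eigenvalue_strict_upper_bound
    (N : ℕ) (hN : 1 ≤ N)
    (Ω : Set (EuclideanSpace ℝ (Fin N)))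
    (hΩne : Ω.Nonempty) (hΩopen : IsOpen Ω) (hΩbdd : Bornology.IsBounded Ω)
    (hΩconn : IsConnected Ω)
    (J : EuclideanSpace ℝ (Fin N) → ℝ)
    (hJcont : Continuous J) (hJnonneg : ∀ x, 0 ≤ J x)
    (γ : ℝ) (hγ : 0 < γ)
    (hJsupp : Function.support J ⊆ Metric.ball (0 : EuclideanSpace ℝ (Fin N)) γ)
    (hJ0 : 0 < J 0) (hJint : ∫ x, J x = 1)
    (T : ℝ) (hT : 0 < T)
    (a : ℝ → EuclideanSpace ℝ (Fin N) → ℝ)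
    (hacont : Continuous fun p : ℝ × EuclideanSpace ℝ (Fin N) => a p.1 p.2)
    (haper : ∀ t x, a (t + T) x = a t x)
    (D σ k : ℝ) (hD : 0 < D) (hσ : 0 < σ) (hk : 0 ≤ k)
    (lam : ℝ) (φ : ℝ → EuclideanSpace ℝ (Fin N) → ℝ)
    (heig : isPEigenpair Ω J a T D σ k lam φ) :
    lam < sInf ((fun x => (D / σ ^ ((N : ℝ) + k)) * (∫ y in Ω, J (σ⁻¹ • (x - y)))
      - timeAvg T a x) '' closure Ω) := by
  classical
  obtain ⟨⟨⟨hφcont, hφC1, hφper⟩, hφpos⟩, heq⟩ := heig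
  have hcpos : 0 < D / σ ^ ((N:ℝ) + k) := div_pos hD (Real.rpow_pos_of_pos hσ _)
  set c : ℝ := D / σ ^ ((N:ℝ) + k) with hc
  have hKcl : IsCompact (closure Ω) := hΩbdd.isCompact_closure
  have hclne : (closure Ω).Nonempty := hΩne.closure
  have hΩmeas : MeasurableSet Ω := hΩopen.measurableSet
  have hΩfin : volume Ω < ⊤ := hΩbdd.measure_lt_top
  have hIntConst : ∀ B : ℝ, IntegrableOn (fun _ => B) Ω volume :=
    fun B => integrableOn_const hΩfin.ne
  -- bound on J
  obtain ⟨C, hC⟩ := (isCompact_closedBall (0:EuclideanSpace ℝ (Fin N)) γ).exists_bound_of_continuousOn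
    hJcont.continuousOn
  have hMJ : ∀ z, J z ≤ max C 0 := by
    intro z
    by_cases hz : z ∈ Metric.closedBall (0:EuclideanSpace ℝ (Fin N)) γ
    · exact le_trans (le_abs_self _) (le_trans (hC z hz) (le_max_left _ _))
    · have hz0 : J z = 0 := by
        by_contra hne
        exact hz (Metric.ball_subset_closedBall (hJsupp (Function.mem_support.2 hne)))
      simp [hz0]
  set MJ : ℝ := max C 0 with hMJdef
  have hMJ0 : 0 ≤ MJ := le_max_right _ _
  -- continuity of kernel slices
  have hJy : ∀ x : EuclideanSpace ℝ (Fin N), Continuous fun y => J (σ⁻¹ • (x - y)) :=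
    fun x => hJcont.comp (by fun_prop)
  have hJx2 : ∀ y : EuclideanSpace ℝ (Fin N), Continuous fun x => J (σ⁻¹ • (x - y)) :=
    fun y => hJcont.comp (by fun_prop)
  have hnormJ : ∀ (x y : EuclideanSpace ℝ (Fin N)), ‖J (σ⁻¹ • (x - y))‖ ≤ MJ := by
    intro x y
    rw [Real.norm_eq_abs, abs_of_nonneg (hJnonneg _)]
    exact hMJ _
  -- integrability of the kernel
  have hJintOn : ∀ x : EuclideanSpace ℝ (Fin N),
      IntegrableOn (fun y => J (σ⁻¹ • (x - y))) Ω := by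
    intro x
    exact (hIntConst MJ).mono' ((hJy x).aestronglyMeasurable.restrict)
      (ae_of_all _ fun y => hnormJ x y)
  -- continuity of the kernel mass
  have hKfcont : Continuous fun x => ∫ y in Ω, J (σ⁻¹ • (x - y)) := by
    rw [continuous_iff_continuousAt]
    intro x₀
    apply continuousAt_of_dominated (bound := fun _ => MJ)
    · exact Eventually.of_forall fun x => ((hJy x).aestronglyMeasurable.restrict)
    · exact Eventually.of_forall fun x => ae_of_all _ fun y => hnormJ x y
    · exact hIntConst MJ
    · exact ae_of_all _ fun y => (hJx2 y).continuousAt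
  -- continuity of timeAvg
  have haT : Continuous fun x : EuclideanSpace ℝ (Fin N) => timeAvg T a x := by
    have h2 : Continuous fun x : EuclideanSpace ℝ (Fin N) => ∫ t in Set.Ioc (0:ℝ) T, a t x := by
      rw [continuous_iff_continuousAt]
      intro x₀
      obtain ⟨C₁, hC₁⟩ := ((isCompact_Icc (a := (0:ℝ)) (b := T)).prod
        (isCompact_closedBall x₀ 1)).exists_bound_of_continuousOn hacont.continuousOn
      apply continuousAt_of_dominated (bound := fun _ => C₁)
      · exact Eventually.of_forall fun x =>
          ((hacont.comp (continuous_id.prodMk continuous_const)).aestronglyMeasurable.restrict)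
      · filter_upwards [Metric.ball_mem_nhds x₀ one_pos] with x hx
        refine (ae_restrict_iff' measurableSet_Ioc).2 (ae_of_all _ fun t ht => ?_)
        exact hC₁ (t, x) ⟨⟨ht.1.le, ht.2⟩, Metric.ball_subset_closedBall hx⟩
      · exact integrableOn_const measure_Ioc_lt_top.ne
      · exact ae_of_all _ fun t =>
          (hacont.comp (continuous_const.prodMk continuous_id)).continuousAt
    have heqfun : (fun x : EuclideanSpace ℝ (Fin N) => timeAvg T a x)
        = fun x => (1/T) * ∫ t in Set.Ioc (0:ℝ) T, a t x := by
      funext x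
      rw [timeAvg, intervalIntegral.integral_of_le hT.le]
    rw [heqfun]
    exact continuous_const.mul h2
  -- the function to minimize
  set g : EuclideanSpace ℝ (Fin N) → ℝ :=
    fun x => c * (∫ y in Ω, J (σ⁻¹ • (x - y))) - timeAvg T a x with hg
  have hgcont : Continuous g := (continuous_const.mul hKfcont).sub haT
  obtain ⟨x₀, hx₀, hmin⟩ := hKcl.exists_isMinOn hclne hgcont.continuousOn
  have hsInf : sInf (g '' closure Ω) = g x₀ := by
    refine IsLeast.csInf_eq ⟨⟨x₀, hx₀, rfl⟩, ?_⟩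
    rintro z ⟨w, hw, rfl⟩
    exact hmin hw
  rw [hsInf]
  -- now prove lam < g x₀
  -- slice continuity of φ
  have hφconty : ∀ t : ℝ, ContinuousOn (fun y => φ t y) (closure Ω) := by
    intro t
    exact hφcont.comp (Continuous.continuousOn (continuous_const.prodMk continuous_id))
      (fun y hy => ⟨Set.mem_univ _, hy⟩)
  have hφcontt : ∀ y ∈ closure Ω, Continuous fun t => φ t y := fun y hy => (hφC1 y hy).continuous
  set h : ℝ → ℝ := fun t => φ t x₀ with hhdef
  have hhpos : ∀ t, 0 < h t := fun t => hφpos t x₀ hx₀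
  have hhC1 : ContDiff ℝ 1 h := hφC1 x₀ hx₀
  have hhdiff : ∀ t, HasDerivAt h (deriv h t) t :=
    fun t => ((hhC1.differentiable one_ne_zero) t).hasDerivAt
  set I : ℝ → ℝ := fun t => ∫ y in Ω, J (σ⁻¹ • (x₀ - y)) * φ t y with hIdef
  -- integrability of the product
  have hintJφ : ∀ t, IntegrableOn (fun y => J (σ⁻¹ • (x₀ - y)) * φ t y) Ω := by
    intro t
    obtain ⟨B, hB⟩ := hKcl.exists_bound_of_continuousOn (hφconty t)
    refine (hIntConst (MJ * B)).mono'
      (((hJy x₀).continuousOn.mul ((hφconty t).mono subset_closure)).aestronglyMeasurable hΩmeas) ?_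
    refine (ae_restrict_iff' hΩmeas).2 (ae_of_all _ fun y hy => ?_)
    rw [norm_mul]
    exact mul_le_mul (hnormJ _ _) (hB y (subset_closure hy)) (norm_nonneg _) hMJ0
  -- continuity of I
  have hIcont : Continuous I := by
    rw [continuous_iff_continuousAt]
    intro t₀
    obtain ⟨B, hB⟩ := ((isCompact_Icc (a := t₀ - 1) (b := t₀ + 1)).prod hKcl).exists_bound_of_continuousOn
      (hφcont.mono (Set.prod_mono (Set.subset_univ _) subset_rfl))
    apply continuousAt_of_dominated (bound := fun _ => MJ * B)
    · exact Eventually.of_forall fun t =>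
        (((hJy x₀).continuousOn.mul ((hφconty t).mono subset_closure)).aestronglyMeasurable hΩmeas)
    · filter_upwards [Icc_mem_nhds (by linarith : t₀ - 1 < t₀) (by linarith : t₀ < t₀ + 1)] with t ht
      refine (ae_restrict_iff' hΩmeas).2 (ae_of_all _ fun y hy => ?_)
      rw [norm_mul]
      exact mul_le_mul (hnormJ _ _) (hB (t, y) ⟨ht, subset_closure hy⟩) (norm_nonneg _) hMJ0
    · exact hIntConst (MJ * B)
    · exact (ae_restrict_iff' hΩmeas).2 (ae_of_all _ fun y hy =>
        (continuous_const.mul (hφcontt y (subset_closure hy))).continuousAt)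
  -- derivative identity
  have hder : ∀ t, deriv h t = c * I t - c * (∫ y in Ω, J (σ⁻¹ • (x₀ - y))) * h t
      + (a t x₀ + lam) * h t := by
    intro t
    have he := heq t x₀ hx₀
    unfold nlOp at he
    rw [← hc] at he
    have hsplit : (∫ y in Ω, J (σ⁻¹ • (x₀ - y)) * (φ t y - φ t x₀))
        = I t - (∫ y in Ω, J (σ⁻¹ • (x₀ - y))) * φ t x₀ := by
      have hfe : (fun y => J (σ⁻¹ • (x₀ - y)) * (φ t y - φ t x₀))
          = fun y => J (σ⁻¹ • (x₀ - y)) * φ t y - J (σ⁻¹ • (x₀ - y)) * φ t x₀ := by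
        funext y; ring
      rw [hfe, integral_sub (hintJφ t) ((hJintOn x₀).mul_const _), integral_mul_const]
    rw [hsplit] at he
    have hde : deriv (fun s => φ s x₀) t = deriv h t := rfl
    have hht : φ t x₀ = h t := rfl
    rw [hde, hht] at he
    nlinarith [he]
  have hacx : Continuous fun t => a t x₀ := hacont.comp (continuous_id.prodMk continuous_const)
  have hdercont : Continuous fun t => deriv h t := by
    have hfe : (fun t => deriv h t) = fun t =>
        c * I t - c * (∫ y in Ω, J (σ⁻¹ • (x₀ - y))) * h t + (a t x₀ + lam) * h t :=
      funext hder
    rw [hfe]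
    exact ((continuous_const.mul hIcont).sub (continuous_const.mul hhC1.continuous)).add
      ((hacx.add continuous_const).mul hhC1.continuous)
  -- FTC for log h
  have hlog : ∀ t, HasDerivAt (fun s => Real.log (h s)) (deriv h t / h t) t := by
    intro t
    have := (Real.hasDerivAt_log (hhpos t).ne').comp t (hhdiff t)
    rw [div_eq_inv_mul]; exact this
  have hquot_cont : Continuous fun t => deriv h t / h t :=
    hdercont.div hhC1.continuous fun t => (hhpos t).ne'
  have hFTC : ∫ t in (0:ℝ)..T, deriv h t / h t = 0 := by
    rw [intervalIntegral.integral_eq_sub_of_hasDerivAt (fun t _ => hlog t)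
      (hquot_cont.intervalIntegrable 0 T)]
    have hper : h T = h 0 := by
      have := hφper 0 x₀
      simpa using this
    rw [hper, sub_self]
  have hquot : ∀ t, deriv h t / h t
      = c * (I t / h t) + (a t x₀ + (lam - c * (∫ y in Ω, J (σ⁻¹ • (x₀ - y))))) := by
    intro t
    have hne := (hhpos t).ne'
    rw [hder t]
    field_simp
    ring
  have hIh_cont : Continuous fun t => I t / h t :=
    hIcont.div hhC1.continuous fun t => (hhpos t).ne'
  have e1 : ∫ t in (0:ℝ)..T,
      (c * (I t / h t) + (a t x₀ + (lam - c * (∫ y in Ω, J (σ⁻¹ • (x₀ - y)))))) = 0 :=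
    (intervalIntegral.integral_congr fun t _ => (hquot t).symm).trans hFTC
  have e2 : c * (∫ t in (0:ℝ)..T, I t / h t)
      + ((∫ t in (0:ℝ)..T, a t x₀) + (lam - c * (∫ y in Ω, J (σ⁻¹ • (x₀ - y)))) * T) = 0 := by
    have hsp : ∫ t in (0:ℝ)..T,
        (c * (I t / h t) + (a t x₀ + (lam - c * (∫ y in Ω, J (σ⁻¹ • (x₀ - y)))))) =
        c * (∫ t in (0:ℝ)..T, I t / h t)
        + ((∫ t in (0:ℝ)..T, a t x₀) + (lam - c * (∫ y in Ω, J (σ⁻¹ • (x₀ - y)))) * T) := by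
      rw [intervalIntegral.integral_add (f := fun t => c * (I t / h t))
          (g := fun t => a t x₀ + (lam - c * (∫ y in Ω, J (σ⁻¹ • (x₀ - y)))))
          ((continuous_const.mul hIh_cont).intervalIntegrable 0 T)
          ((hacx.add continuous_const).intervalIntegrable 0 T),
        intervalIntegral.integral_const_mul,
        intervalIntegral.integral_add (hacx.intervalIntegrable 0 T) intervalIntegrable_const,
        intervalIntegral.integral_const]
      simp only [smul_eq_mul, sub_zero]
      ring
    exact hsp.symm.trans e1
  -- positivity of ∫ I/h
  have hIpos : ∀ t, 0 < I t := by
    intro t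
    have hU : IsOpen (J ⁻¹' Set.Ioi 0) := hJcont.isOpen_preimage _ isOpen_Ioi
    obtain ⟨δ, hδpos, hδ⟩ := Metric.isOpen_iff.1 hU 0 hJ0
    obtain ⟨y₀, hy₀Ω, hy₀d⟩ := Metric.mem_closure_iff.1 hx₀ (σ * δ) (mul_pos hσ hδpos)
    have hUopen : IsOpen (Ω ∩ Metric.ball x₀ (σ * δ)) := hΩopen.inter Metric.isOpen_ball
    have hUne : (Ω ∩ Metric.ball x₀ (σ * δ)).Nonempty :=
      ⟨y₀, hy₀Ω, by rwa [Metric.mem_ball, dist_comm]⟩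
    rw [hIdef]
    rw [setIntegral_pos_iff_support_of_nonneg_ae
      ((ae_restrict_iff' hΩmeas).2 (ae_of_all _ fun y hy =>
        mul_nonneg (hJnonneg _) (hφpos t y (subset_closure hy)).le)) (hintJφ t)]
    refine lt_of_lt_of_le (hUopen.measure_pos volume hUne) (measure_mono ?_)
    rintro y ⟨hyΩ, hyb⟩
    refine ⟨?_, hyΩ⟩
    have hd1 : ‖x₀ - y‖ < σ * δ := by
      rw [← dist_eq_norm, dist_comm]
      exact Metric.mem_ball.1 hyb
    have hd2 : ‖σ⁻¹ • (x₀ - y)‖ < δ := by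
      rw [norm_smul, Real.norm_eq_abs, abs_of_pos (inv_pos.2 hσ)]
      calc σ⁻¹ * ‖x₀ - y‖ < σ⁻¹ * (σ * δ) :=
            mul_lt_mul_of_pos_left hd1 (inv_pos.2 hσ)
        _ = δ := by field_simp
    have hJpos : 0 < J (σ⁻¹ • (x₀ - y)) := hδ (by rwa [Metric.mem_ball, dist_zero_right])
    exact (mul_pos hJpos (hφpos t y (subset_closure hyΩ))).ne'
  have Ppos : 0 < ∫ t in (0:ℝ)..T, I t / h t :=
    intervalIntegral.intervalIntegral_pos_of_pos_on (hIh_cont.intervalIntegrable 0 T)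
      (fun t _ => div_pos (hIpos t) (hhpos t)) hT
  -- conclude
  have hAT : timeAvg T a x₀ * T = ∫ t in (0:ℝ)..T, a t x₀ := by
    rw [timeAvg]; field_simp
  have hcP : 0 < c * ∫ t in (0:ℝ)..T, I t / h t := mul_pos hcpos Ppos
  have hmul : lam * T < g x₀ * T := by
    have hexp : g x₀ * T
        = c * (∫ y in Ω, J (σ⁻¹ • (x₀ - y))) * T - timeAvg T a x₀ * T := by
      rw [hg]; ring
    rw [hexp, hAT]
    nlinarith [e2, hcP]
  exact lt_of_mul_lt_mul_right hmul hT.le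
end

section
/- Fix D > 0, σ > 0 and k ≥ 0. Let a and a' be two continuous T-periodic (in t) coefficient functions, and let L(a) and L(a') denote the corresponding nonlocal Neumann operators (with the same D, σ, k). If (λ, φ) is a principal eigenpair of −L(a) and (λ', φ') is a principal eigenpair of −L(a'), then |λ − λ'| ≤ sup_{(t,x) ∈ [0,T] × cl(Ω)} |a(t,x) − a'(t,x)|. -/
open MeasureTheory Filter Topology

set_option maxHeartbeats 1000000 in
lemma eig_one_side {N : ℕ} {Ω : Set (EuclideanSpace ℝ (Fin N))}
    (hΩne : Ω.Nonempty) (hΩopen : IsOpen Ω) (hΩbdd : Bornology.IsBounded Ω)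
    {J : EuclideanSpace ℝ (Fin N) → ℝ} (hJcont : Continuous J) (hJnonneg : ∀ x, 0 ≤ J x)
    {T : ℝ} (hT : 0 < T)
    {a a' : ℝ → EuclideanSpace ℝ (Fin N) → ℝ}
    {D σ k : ℝ} (hD : 0 < D) (hσ : 0 < σ)
    {lam lam' : ℝ} {φ φ' : ℝ → EuclideanSpace ℝ (Fin N) → ℝ}
    (heig : isPEigenpair Ω J a T D σ k lam φ)
    (heig' : isPEigenpair Ω J a' T D σ k lam' φ')
    {M : ℝ} (hM : ∀ t ∈ Set.Icc (0:ℝ) T, ∀ x ∈ closure Ω, a t x - a' t x ≤ M) :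
    lam' - lam ≤ M := by
  obtain ⟨⟨⟨hφc, hφC1, hφper⟩, hφpos⟩, hφeq⟩ := heig
  obtain ⟨⟨⟨hφ'c, hφ'C1, hφ'per⟩, hφ'pos⟩, hφ'eq⟩ := heig'
  have hclΩ : IsCompact (closure Ω) :=
    Metric.isCompact_of_isClosed_isBounded isClosed_closure hΩbdd.closure
  set K : Set (ℝ × EuclideanSpace ℝ (Fin N)) := Set.Icc (0:ℝ) T ×ˢ closure Ω with hK
  have hKcomp : IsCompact K := isCompact_Icc.prod hclΩ
  have hKsub : K ⊆ Set.univ ×ˢ closure Ω := fun p hp => ⟨Set.mem_univ _, hp.2⟩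
  obtain ⟨x₁, hx₁⟩ := hΩne
  have hKne : K.Nonempty := ⟨(0, x₁), ⟨Set.mem_Icc.2 ⟨le_rfl, hT.le⟩, subset_closure hx₁⟩⟩
  set W : ℝ × EuclideanSpace ℝ (Fin N) → ℝ := fun p => φ p.1 p.2 / φ' p.1 p.2 with hW
  have hWc : ContinuousOn W K :=
    (hφc.mono hKsub).div (hφ'c.mono hKsub) fun p hp => (hφ'pos p.1 p.2 hp.2).ne'
  obtain ⟨p₀, hp₀K, hmax⟩ := hKcomp.exists_isMaxOn hKne hWc
  obtain ⟨t₀, x₀⟩ := p₀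
  have ht₀ : t₀ ∈ Set.Icc (0:ℝ) T := hp₀K.1
  have hx₀ : x₀ ∈ closure Ω := hp₀K.2
  set A := φ t₀ x₀ with hA
  set B := φ' t₀ x₀ with hB
  have hApos : 0 < A := hφpos t₀ x₀ hx₀
  have hBpos : 0 < B := hφ'pos t₀ x₀ hx₀
  -- spatial comparison
  have hspace : ∀ y ∈ closure Ω, φ t₀ y * B ≤ φ' t₀ y * A := by
    intro y hy
    have h1 : W (t₀, y) ≤ W (t₀, x₀) := hmax ⟨ht₀, hy⟩
    have hy' : 0 < φ' t₀ y := hφ'pos t₀ y hy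
    rw [hW] at h1
    simp only at h1
    calc φ t₀ y * B = (φ t₀ y / φ' t₀ y) * φ' t₀ y * B := by field_simp
    _ ≤ (A / B) * φ' t₀ y * B := by
        apply mul_le_mul_of_nonneg_right (mul_le_mul_of_nonneg_right h1 hy'.le) hBpos.le
    _ = φ' t₀ y * A := by field_simp
  -- temporal: t₀ is a global max of g
  set g : ℝ → ℝ := fun s => φ s x₀ / φ' s x₀ with hg
  have hgper : Function.Periodic g T := by
    intro s; simp only [hg, hφper, hφ'per]
  have hgmax : ∀ s, g s ≤ g t₀ := by
    intro s
    have h0 : g s = g (s - (⌊s / T⌋ : ℤ) • T) := (hgper.sub_zsmul_eq _).symm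
    have hmem : s - (⌊s / T⌋ : ℤ) • T ∈ Set.Icc (0:ℝ) T := by
      rw [zsmul_eq_mul]
      exact ⟨Int.sub_floor_div_mul_nonneg s hT, (Int.sub_floor_div_mul_lt s hT).le⟩
    have := hmax (a := (s - (⌊s / T⌋ : ℤ) • T, x₀)) ⟨hmem, hx₀⟩
    rw [h0]; exact this
  -- derivatives
  have hdφ : HasDerivAt (fun s => φ s x₀) (deriv (fun s => φ s x₀) t₀) t₀ :=
    (((hφC1 x₀ hx₀).differentiable one_ne_zero) t₀).hasDerivAt
  have hdφ' : HasDerivAt (fun s => φ' s x₀) (deriv (fun s => φ' s x₀) t₀) t₀ :=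
    (((hφ'C1 x₀ hx₀).differentiable one_ne_zero) t₀).hasDerivAt
  set dφ := deriv (fun s => φ s x₀) t₀ with hdφdef
  set dφ' := deriv (fun s => φ' s x₀) t₀ with hdφ'def
  have hgd : HasDerivAt g ((dφ * B - A * dφ') / B ^ 2) t₀ := hdφ.div hdφ' hBpos.ne'
  have hlm : IsLocalMax g t₀ := Filter.Eventually.of_forall hgmax
  have hz : (dφ * B - A * dφ') / B ^ 2 = 0 := hlm.hasDerivAt_eq_zero hgd
  have h0 : dφ * B - A * dφ' = 0 := by
    rcases div_eq_zero_iff.mp hz with h | h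
    · exact h
    · exact absurd h (pow_ne_zero 2 hBpos.ne')
  -- eigen equations
  set c := D / σ ^ ((N : ℝ) + k) with hc
  have hcpos : 0 < c := by
    apply div_pos hD
    positivity
  set I := ∫ y in Ω, J (σ⁻¹ • (x₀ - y)) * (φ t₀ y - φ t₀ x₀) with hI
  set I' := ∫ y in Ω, J (σ⁻¹ • (x₀ - y)) * (φ' t₀ y - φ' t₀ x₀) with hI'
  have e1 : dφ = c * I + (a t₀ x₀ + lam) * A := by
    have := hφeq t₀ x₀ hx₀
    rw [nlOp] at this
    simp only [← hdφdef, ← hc, ← hI, ← hA] at this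
    linarith
  have e2 : dφ' = c * I' + (a' t₀ x₀ + lam') * B := by
    have := hφ'eq t₀ x₀ hx₀
    rw [nlOp] at this
    simp only [← hdφ'def, ← hc, ← hI', ← hB] at this
    linarith
  -- integrability and integral comparison
  have hcontpair : Continuous fun y : EuclideanSpace ℝ (Fin N) => (t₀, y) :=
    Continuous.prodMk_right t₀
  have hφt : ContinuousOn (fun y => φ t₀ y) (closure Ω) :=
    hφc.comp hcontpair.continuousOn fun y hy => ⟨Set.mem_univ _, hy⟩
  have hφ't : ContinuousOn (fun y => φ' t₀ y) (closure Ω) :=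
    hφ'c.comp hcontpair.continuousOn fun y hy => ⟨Set.mem_univ _, hy⟩
  have hJy : Continuous fun y : EuclideanSpace ℝ (Fin N) => J (σ⁻¹ • (x₀ - y)) :=
    hJcont.comp ((continuous_const.sub continuous_id).const_smul σ⁻¹)
  have hfint : IntegrableOn (fun y => J (σ⁻¹ • (x₀ - y)) * (φ t₀ y - A)) Ω volume :=
    ((hJy.continuousOn.mul (hφt.sub continuousOn_const)).integrableOn_compact hclΩ).mono_set
      subset_closure
  have hf'int : IntegrableOn (fun y => J (σ⁻¹ • (x₀ - y)) * (φ' t₀ y - B)) Ω volume :=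
    ((hJy.continuousOn.mul (hφ't.sub continuousOn_const)).integrableOn_compact hclΩ).mono_set
      subset_closure
  have hcomb : I * B - I' * A = ∫ y in Ω,
      (J (σ⁻¹ • (x₀ - y)) * (φ t₀ y - A) * B - J (σ⁻¹ • (x₀ - y)) * (φ' t₀ y - B) * A) := by
    rw [integral_sub (hfint.mul_const B) (hf'int.mul_const A), integral_mul_const,
      integral_mul_const, hI, hI']
  have hIle : I * B - I' * A ≤ 0 := by
    rw [hcomb]
    apply setIntegral_nonpos hΩopen.measurableSet
    intro y hy
    have hs := hspace y (subset_closure hy)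
    have hJ := hJnonneg (σ⁻¹ • (x₀ - y))
    nlinarith [mul_nonneg hJ (sub_nonneg.2 hs)]
  -- conclude
  have hd : a t₀ x₀ - a' t₀ x₀ ≤ M := hM t₀ ht₀ x₀ hx₀
  rw [e1, e2] at h0
  nlinarith [mul_pos hApos hBpos, mul_nonpos_of_nonneg_of_nonpos hcpos.le hIle,
    mul_le_mul_of_nonneg_right hd (mul_pos hApos hBpos).le]

set_option maxHeartbeats 1000000 in
theorem eigenvalue_lipschitz_in_coefficient
    (N : ℕ) (hN : 1 ≤ N)
    (Ω : Set (EuclideanSpace ℝ (Fin N)))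
    (hΩne : Ω.Nonempty) (hΩopen : IsOpen Ω) (hΩbdd : Bornology.IsBounded Ω)
    (hΩconn : IsConnected Ω)
    (J : EuclideanSpace ℝ (Fin N) → ℝ)
    (hJcont : Continuous J) (hJnonneg : ∀ x, 0 ≤ J x)
    (γ : ℝ) (hγ : 0 < γ)
    (hJsupp : Function.support J ⊆ Metric.ball (0 : EuclideanSpace ℝ (Fin N)) γ)
    (hJ0 : 0 < J 0) (hJint : ∫ x, J x = 1)
    (T : ℝ) (hT : 0 < T)
    (a a' : ℝ → EuclideanSpace ℝ (Fin N) → ℝ)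
    (hacont : Continuous fun p : ℝ × EuclideanSpace ℝ (Fin N) => a p.1 p.2)
    (haper : ∀ t x, a (t + T) x = a t x)
    (ha'cont : Continuous fun p : ℝ × EuclideanSpace ℝ (Fin N) => a' p.1 p.2)
    (ha'per : ∀ t x, a' (t + T) x = a' t x)
    (D σ k : ℝ) (hD : 0 < D) (hσ : 0 < σ) (hk : 0 ≤ k)
    (lam lam' : ℝ) (φ φ' : ℝ → EuclideanSpace ℝ (Fin N) → ℝ)
    (heig : isPEigenpair Ω J a T D σ k lam φ)
    (heig' : isPEigenpair Ω J a' T D σ k lam' φ') :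
    |lam - lam'| ≤ sSup ((fun p : ℝ × EuclideanSpace ℝ (Fin N) =>
      |a p.1 p.2 - a' p.1 p.2|) '' (Set.Icc 0 T ×ˢ closure Ω)) := by
  have hclΩ : IsCompact (closure Ω) :=
    Metric.isCompact_of_isClosed_isBounded isClosed_closure hΩbdd.closure
  set K : Set (ℝ × EuclideanSpace ℝ (Fin N)) := Set.Icc (0:ℝ) T ×ˢ closure Ω with hK
  have hKcomp : IsCompact K := isCompact_Icc.prod hclΩ
  set f : ℝ × EuclideanSpace ℝ (Fin N) → ℝ := fun p => |a p.1 p.2 - a' p.1 p.2| with hf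
  have hfc : Continuous f := (hacont.sub ha'cont).abs
  have hbdd : BddAbove (f '' K) := (hKcomp.image hfc).bddAbove
  have hmem : ∀ t ∈ Set.Icc (0:ℝ) T, ∀ x ∈ closure Ω,
      |a t x - a' t x| ≤ sSup (f '' K) := by
    intro t ht x hx
    exact le_csSup hbdd ⟨(t, x), ⟨ht, hx⟩, rfl⟩
  rw [abs_sub_le_iff]
  constructor
  · exact eig_one_side hΩne hΩopen hΩbdd hJcont hJnonneg hT hD hσ heig' heig
      (fun t ht x hx => le_trans (le_trans (le_abs_self _) (abs_sub_comm _ _).le)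
        (hmem t ht x hx))
  · exact eig_one_side hΩne hΩopen hΩbdd hJcont hJnonneg hT hD hσ heig heig'
      (fun t ht x hx => le_trans (le_abs_self _) (hmem t ht x hx))
end
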